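/- arXiv:2310.20220 — 8 statements merged into one kernel-verified Lean document; each statement's English description precedes it below -/
import Mathlib

section
/- Let v = (v(0),...,v(n)) ∈ ℝ^{n+1} be a unit vector and define F(v) = -∑_{x=1}^{n} v(x-1)v(x) + (1/2)(v(0)² + v(n)²). Then |F(v)| ≤ 1, with equality if and only if v(x) = -v(x-1) for all x = 1,...,n and v(0) = ±1/√(n+1). -/
theorem stmt5 (n : ℕ) (v : Fin (n + 1) → ℝ) (hv : ∑ x, v x ^ 2 = 1) :
    |(-∑ x : Fin n, v x.castSucc * v x.succ) +
        (v 0 ^ 2 + v (Fin.last n) ^ 2) / 2| ≤ 1 ∧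
    (|(-∑ x : Fin n, v x.castSucc * v x.succ) +
        (v 0 ^ 2 + v (Fin.last n) ^ 2) / 2| = 1 ↔
      (∀ x : Fin n, v x.succ = -v x.castSucc) ∧
        (v 0 = 1 / Real.sqrt (n + 1) ∨ v 0 = -(1 / Real.sqrt (n + 1)))) := by
  have hC : (∑ x : Fin n, v x.castSucc ^ 2) = 1 - v (Fin.last n) ^ 2 := by
    have h1 : (∑ x : Fin n, v x.castSucc ^ 2) + v (Fin.last n) ^ 2 = 1 := by
      rw [← hv]; exact (Fin.sum_univ_castSucc (fun i => v i ^ 2)).symm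
    linarith
  have hD : (∑ x : Fin n, v x.succ ^ 2) = 1 - v 0 ^ 2 := by
    have h1 : v 0 ^ 2 + (∑ x : Fin n, v x.succ ^ 2) = 1 := by
      rw [← hv]; exact (Fin.sum_univ_succ (fun i => v i ^ 2)).symm
    linarith
  set S := ∑ x : Fin n, (v x.castSucc + v x.succ) ^ 2 with hSdef
  set G := ∑ x : Fin n, (v x.castSucc - v x.succ) ^ 2 with hGdef
  have hSnn : 0 ≤ S := Finset.sum_nonneg fun _ _ => sq_nonneg _
  have hGnn : 0 ≤ G := Finset.sum_nonneg fun _ _ => sq_nonneg _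
  have hSexp : S = (∑ x : Fin n, v x.castSucc ^ 2) + (∑ x : Fin n, v x.succ ^ 2)
      + 2 * ∑ x : Fin n, v x.castSucc * v x.succ := by
    rw [hSdef]
    simp_rw [add_sq]
    rw [Finset.sum_add_distrib, Finset.sum_add_distrib, Finset.mul_sum]
    simp_rw [← mul_assoc]
    ring
  have hGexp : G = (∑ x : Fin n, v x.castSucc ^ 2) + (∑ x : Fin n, v x.succ ^ 2)
      - 2 * ∑ x : Fin n, v x.castSucc * v x.succ := by
    rw [hGdef]
    simp_rw [sub_sq]
    rw [Finset.sum_add_distrib, Finset.sum_sub_distrib, Finset.mul_sum]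
    simp_rw [← mul_assoc]
    ring
  have hSid : (-∑ x : Fin n, v x.castSucc * v x.succ) +
      (v 0 ^ 2 + v (Fin.last n) ^ 2) / 2 = 1 - S / 2 := by
    rw [hSexp]; linarith
  have hGid : (-∑ x : Fin n, v x.castSucc * v x.succ) +
      (v 0 ^ 2 + v (Fin.last n) ^ 2) / 2 = v 0 ^ 2 + v (Fin.last n) ^ 2 - 1 + G / 2 := by
    rw [hGexp]; linarith
  have habs : |(-∑ x : Fin n, v x.castSucc * v x.succ) +
      (v 0 ^ 2 + v (Fin.last n) ^ 2) / 2| ≤ 1 := by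
    rw [abs_le]
    constructor
    · rw [hGid]; nlinarith [sq_nonneg (v 0), sq_nonneg (v (Fin.last n))]
    · rw [hSid]; linarith
  refine ⟨habs, ?_, ?_⟩
  · intro h
    rcases (abs_eq (by norm_num : (0:ℝ) ≤ 1)).mp h with hF | hF
    · -- F = 1 case
      have hS0 : S = 0 := by rw [hSid] at hF; linarith
      have hterm : ∀ x : Fin n, v x.succ = -v x.castSucc := by
        intro x
        have := (Finset.sum_eq_zero_iff_of_nonneg
          (fun i _ => sq_nonneg (v i.castSucc + v i.succ))).mp hS0 x (Finset.mem_univ x)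
        have := sq_eq_zero_iff.mp this
        linarith
      refine ⟨hterm, ?_⟩
      have hall : ∀ x : Fin (n + 1), v x ^ 2 = v 0 ^ 2 := by
        intro x
        induction x using Fin.induction with
        | zero => rfl
        | succ i ih =>
          rw [hterm i, neg_pow]
          simpa using ih
      have hsum : ((n : ℝ) + 1) * v 0 ^ 2 = 1 := by
        have h1 : (∑ _x : Fin (n + 1), v 0 ^ 2) = 1 := by
          rw [← hv]; exact Finset.sum_congr rfl (fun x _ => (hall x).symm)
        rw [Finset.sum_const, Finset.card_univ, Fintype.card_fin, nsmul_eq_mul] at h1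
        push_cast at h1
        linarith
      have hpos : (0:ℝ) < (n : ℝ) + 1 := by positivity
      have ha : (1 / Real.sqrt ((n : ℝ) + 1)) ^ 2 = 1 / ((n : ℝ) + 1) := by
        rw [div_pow, one_pow, Real.sq_sqrt hpos.le]
      have hv0 : v 0 ^ 2 = (1 / Real.sqrt ((n : ℝ) + 1)) ^ 2 := by
        rw [ha, eq_div_iff hpos.ne']
        linear_combination hsum
      have hfac : (v 0 - 1 / Real.sqrt ((n : ℝ) + 1)) * (v 0 + 1 / Real.sqrt ((n : ℝ) + 1)) = 0 := by
        nlinarith [hv0]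
      rcases mul_eq_zero.mp hfac with h1 | h1
      · left; linarith
      · right; linarith
    · -- F = -1 case: contradiction
      exfalso
      rw [hGid] at hF
      have hG0 : G = 0 := by
        linarith [sq_nonneg (v 0), sq_nonneg (v (Fin.last n))]
      have hv00 : v 0 = 0 := by
        have h2 : v 0 ^ 2 = 0 := by
          linarith [sq_nonneg (v 0), sq_nonneg (v (Fin.last n))]
        exact sq_eq_zero_iff.mp h2
      have hterm : ∀ x : Fin n, v x.succ = v x.castSucc := by
        intro x
        have := (Finset.sum_eq_zero_iff_of_nonneg
          (fun i _ => sq_nonneg (v i.castSucc - v i.succ))).mp hG0 x (Finset.mem_univ x)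
        have := sq_eq_zero_iff.mp this
        linarith
      have hall : ∀ x : Fin (n + 1), v x = 0 := by
        intro x
        induction x using Fin.induction with
        | zero => exact hv00
        | succ i ih => rw [hterm i]; exact ih
      rw [Finset.sum_congr rfl (fun x _ => by rw [hall x])] at hv
      simp at hv
  · rintro ⟨h1, _⟩
    have hS0 : S = 0 := by
      rw [hSdef]
      apply Finset.sum_eq_zero
      intro x _
      rw [h1 x]
      ring
    rw [hSid, hS0]
    norm_num
end

section
/- Let 0 < ν < 1 and -1 ≤ λ ≤ 1. Then both roots μ± of μ² - (1-ν)λμ - ν = 0 are real, with -1 ≤ μ₋ ≤ -ν < 0 < ν ≤ μ₊ ≤ 1. Moreover μ₋ = -1 if and only if λ = -1, and μ₊ = 1 if and only if λ = 1. -/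
theorem stmt8 (ν lam : ℝ) (hν0 : 0 < ν) (hν1 : ν < 1) (hlam : -1 ≤ lam) (hlam1 : lam ≤ 1) :
    ∃ μp μm : ℝ,
      μp = ((1 - ν) * lam + Real.sqrt ((1 - ν) ^ 2 * lam ^ 2 + 4 * ν)) / 2 ∧
      μm = ((1 - ν) * lam - Real.sqrt ((1 - ν) ^ 2 * lam ^ 2 + 4 * ν)) / 2 ∧
      μp ^ 2 - (1 - ν) * lam * μp - ν = 0 ∧
      μm ^ 2 - (1 - ν) * lam * μm - ν = 0 ∧
      -1 ≤ μm ∧ μm ≤ -ν ∧ -ν < 0 ∧ 0 < ν ∧ ν ≤ μp ∧ μp ≤ 1 ∧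
      (μm = -1 ↔ lam = -1) ∧ (μp = 1 ↔ lam = 1) := by
  set D : ℝ := (1 - ν) ^ 2 * lam ^ 2 + 4 * ν with hD
  have hDpos : 0 < D := by positivity
  set s : ℝ := Real.sqrt D with hsdef
  have hs0 : 0 ≤ s := Real.sqrt_nonneg _
  have hs2 : s ^ 2 = D := Real.sq_sqrt hDpos.le
  refine ⟨((1 - ν) * lam + s) / 2, ((1 - ν) * lam - s) / 2, rfl, rfl, ?_, ?_, ?_, ?_, ?_, hν0, ?_, ?_, ?_, ?_⟩
  · nlinarith [hs2]
  · nlinarith [hs2]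
  · -- -1 ≤ μm  ⟺  s ≤ 2 + (1-ν)λ
    have h : s ≤ 2 + (1 - ν) * lam := by
      rw [hsdef]
      calc Real.sqrt D ≤ Real.sqrt ((2 + (1 - ν) * lam) ^ 2) := by
            apply Real.sqrt_le_sqrt; rw [hD]; nlinarith [sq_nonneg (1 + lam), sq_nonneg (1 - ν)]
        _ = 2 + (1 - ν) * lam := Real.sqrt_sq (by nlinarith)
    linarith
  · -- μm ≤ -ν  ⟺  (1-ν)λ + 2ν ≤ s
    have h : (1 - ν) * lam + 2 * ν ≤ s := by
      rcases le_or_gt ((1 - ν) * lam + 2 * ν) 0 with h0 | h0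
      · linarith
      · rw [hsdef]
        refine (Real.le_sqrt h0.le hDpos.le).mpr ?_
        rw [hD]
        nlinarith [mul_nonneg (mul_nonneg hν0.le (by linarith : (0:ℝ) ≤ 1 - ν)) (by linarith : (0:ℝ) ≤ 1 - lam)]
    linarith
  · linarith
  · -- ν ≤ μp  ⟺  2ν - (1-ν)λ ≤ s
    have h : 2 * ν - (1 - ν) * lam ≤ s := by
      rcases le_or_gt (2 * ν - (1 - ν) * lam) 0 with h0 | h0
      · linarith
      · rw [hsdef]
        refine (Real.le_sqrt h0.le hDpos.le).mpr ?_
        rw [hD]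
        nlinarith [mul_nonneg (mul_nonneg hν0.le (by linarith : (0:ℝ) ≤ 1 - ν)) (by linarith : (0:ℝ) ≤ 1 + lam)]
    linarith
  · -- μp ≤ 1  ⟺  s ≤ 2 - (1-ν)λ
    have h : s ≤ 2 - (1 - ν) * lam := by
      rw [hsdef]
      calc Real.sqrt D ≤ Real.sqrt ((2 - (1 - ν) * lam) ^ 2) := by
            apply Real.sqrt_le_sqrt; rw [hD]; nlinarith [sq_nonneg (1 - lam), sq_nonneg (1 - ν)]
        _ = 2 - (1 - ν) * lam := Real.sqrt_sq (by nlinarith)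
    linarith
  · constructor
    · intro h
      have hs : s = 2 + (1 - ν) * lam := by linarith
      have : (1 - ν) * lam = -(1 - ν) := by nlinarith [hs2]
      have h1ν : (0:ℝ) < 1 - ν := by linarith
      have := mul_left_cancel₀ (ne_of_gt h1ν) (by linarith : (1 - ν) * lam = (1 - ν) * (-1))
      linarith
    · intro h
      subst h
      have : s = 1 + ν := by
        rw [hsdef, hD]
        rw [show (1 - ν) ^ 2 * (-1:ℝ) ^ 2 + 4 * ν = (1 + ν) ^ 2 by ring]
        exact Real.sqrt_sq (by linarith)
      rw [this]; ring
  · constructor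
    · intro h
      have hs : s = 2 - (1 - ν) * lam := by linarith
      have : (1 - ν) * lam = 1 - ν := by nlinarith [hs2]
      have h1ν : (0:ℝ) < 1 - ν := by linarith
      have := mul_left_cancel₀ (ne_of_gt h1ν) (by linarith : (1 - ν) * lam = (1 - ν) * 1)
      linarith
    · intro h
      subst h
      have : s = 1 + ν := by
        rw [hsdef, hD]
        rw [show (1 - ν) ^ 2 * (1:ℝ) ^ 2 + 4 * ν = (1 + ν) ^ 2 by ring]
        exact Real.sqrt_sq (by linarith)
      rw [this]; ring
end

section
/- Let -1 < ν < 0 and let λ be real with √(-4ν)/(1-ν) < |λ| ≤ 1. Then (1-ν)²λ² + 4ν > 0, so the roots μ± of μ² - (1-ν)λμ - ν = 0 are real and distinct, and both satisfy |μ±| ≤ 1. -/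
set_option maxHeartbeats 1600000 in
theorem stmt10 (ν lam : ℝ) (hν0 : -1 < ν) (hν1 : ν < 0)
    (hlow : Real.sqrt (-4 * ν) / (1 - ν) < |lam|) (hup : |lam| ≤ 1) :
    0 < (1 - ν) ^ 2 * lam ^ 2 + 4 * ν ∧
    ∃ μp μm : ℝ,
      μp = ((1 - ν) * lam + Real.sqrt ((1 - ν) ^ 2 * lam ^ 2 + 4 * ν)) / 2 ∧
      μm = ((1 - ν) * lam - Real.sqrt ((1 - ν) ^ 2 * lam ^ 2 + 4 * ν)) / 2 ∧
      μp ^ 2 - (1 - ν) * lam * μp - ν = 0 ∧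
      μm ^ 2 - (1 - ν) * lam * μm - ν = 0 ∧
      μp ≠ μm ∧ |μp| ≤ 1 ∧ |μm| ≤ 1 := by
  have h1 : (0:ℝ) < 1 - ν := by linarith
  have hsq : Real.sqrt (-4 * ν) < (1 - ν) * |lam| := by
    rw [div_lt_iff₀ h1] at hlow; linarith [hlow]
  have hsq0 : (0:ℝ) ≤ Real.sqrt (-4 * ν) := Real.sqrt_nonneg _
  have hs2 : Real.sqrt (-4 * ν) ^ 2 = -4 * ν := Real.sq_sqrt (by linarith)
  have hD : 0 < (1 - ν) ^ 2 * lam ^ 2 + 4 * ν := by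
    have h2 : (-4) * ν < ((1 - ν) * |lam|) ^ 2 := by nlinarith
    have := sq_abs lam
    nlinarith
  set D := (1 - ν) ^ 2 * lam ^ 2 + 4 * ν with hDdef
  set s := Real.sqrt D with hsdef
  have hsD : s ^ 2 = D := Real.sq_sqrt hD.le
  have hspos : 0 < s := Real.sqrt_pos.mpr hD
  refine ⟨hD, _, _, rfl, rfl, by nlinarith [hsD], by nlinarith [hsD], by
      intro h; field_simp at h; nlinarith, ?_, ?_⟩
  · have habs : -|lam| ≤ lam ∧ lam ≤ |lam| := abs_le.mp le_rfl
    have hr : 0 ≤ 2 - (1 - ν) * |lam| := by nlinarith [abs_nonneg lam]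
    have hs2r : s ^ 2 ≤ (2 - (1 - ν) * |lam|) ^ 2 := by
      nlinarith [hsD, sq_abs lam]
    have hsle : s ≤ 2 - (1 - ν) * |lam| := by nlinarith [hs2r, hspos, hr]
    have hla := mul_le_mul_of_nonneg_left habs.2 h1.le
    have hlb := mul_le_mul_of_nonneg_left habs.1 h1.le
    rw [abs_le]
    constructor <;> [linarith [hlb, hsle, hspos]; linarith [hla, hsle, hspos]]
  · have habs : -|lam| ≤ lam ∧ lam ≤ |lam| := abs_le.mp le_rfl
    have hr : 0 ≤ 2 - (1 - ν) * |lam| := by nlinarith [abs_nonneg lam]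
    have hs2r : s ^ 2 ≤ (2 - (1 - ν) * |lam|) ^ 2 := by
      nlinarith [hsD, sq_abs lam]
    have hsle : s ≤ 2 - (1 - ν) * |lam| := by nlinarith [hs2r, hspos, hr]
    have hla := mul_le_mul_of_nonneg_left habs.2 h1.le
    have hlb := mul_le_mul_of_nonneg_left habs.1 h1.le
    rw [abs_le]
    constructor <;> [linarith [hlb, hsle, hspos]; linarith [hla, hsle, hspos]]
end

section
/- With v₀ the distribution satisfying the detailed balance conditions v₀(x)(1-p_{x,L}) = v₀(x+1)p_{x+1,R}, the vector u₀ = ∑_{x=0}^{n} v₀(x) |x⟩ ⊗ (1/(1-ν₂))(p_{x,R}, 1-p_{x,L})^T is a fixed point of the time evolution operator U = SC of the correlated random walk on P_{n+1}: U u₀ = u₀. -/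
/-- The shift operator `S` of the CRW on the path `P_{n+1}`, acting on states
`ψ : Fin (n+1) × Fin 2 → ℝ` where the coin index `0` stands for `L` and `1` for `R`. -/
def crwS (n : ℕ) (ψ : Fin (n + 1) × Fin 2 → ℝ) : Fin (n + 1) × Fin 2 → ℝ :=
  fun p =>
    if p.2 = 0 then
      -- component on |y, L⟩ : comes from |y-1, R⟩, or from |0, L⟩ when y = 0
      if (p.1 : ℕ) = 0 then ψ (0, 0)
      else ψ (⟨(p.1 : ℕ) - 1, Nat.lt_of_le_of_lt (Nat.sub_le _ _) p.1.isLt⟩, 1)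
    else
      -- component on |y, R⟩ : comes from |y+1, L⟩, or from |n, R⟩ when y = n
      if h : (p.1 : ℕ) = n then ψ (p.1, 1)
      else ψ (⟨(p.1 : ℕ) + 1, by have := p.1.isLt; omega⟩, 0)

/-- The coin operator `C` of the CRW on the path `P_{n+1}`, with coins
`C_x = [[p_{x,L}, p_{x,R}], [1 - p_{x,L}, 1 - p_{x,R}]]`. -/
def crwC (n : ℕ) (pL pR : ℕ → ℝ) (ψ : Fin (n + 1) × Fin 2 → ℝ) :
    Fin (n + 1) × Fin 2 → ℝ :=
  fun p =>
    if p.2 = 0 then pL p.1 * ψ (p.1, 0) + pR p.1 * ψ (p.1, 1)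
    else (1 - pL p.1) * ψ (p.1, 0) + (1 - pR p.1) * ψ (p.1, 1)

/-- The time evolution operator `U = SC` of the CRW on the path `P_{n+1}`. -/
def crwU (n : ℕ) (pL pR : ℕ → ℝ) (ψ : Fin (n + 1) × Fin 2 → ℝ) :
    Fin (n + 1) × Fin 2 → ℝ :=
  crwS n (crwC n pL pR ψ)

theorem stmt13 (n : ℕ) (pL pR : ℕ → ℝ) (ν : ℝ)
    (hν0 : 0 < |ν|) (hν1 : |ν| < 1) (hiso : ∀ x ≤ n, pL x - pR x = ν)
    (v0 : ℕ → ℝ)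
    (hdb : ∀ x < n, v0 x * (1 - pL x) = v0 (x + 1) * pR (x + 1)) :
    crwU n pL pR
        (fun p => v0 p.1 * ((if p.2 = 0 then pR p.1 else 1 - pL p.1) / (1 - ν))) =
      fun p => v0 p.1 * ((if p.2 = 0 then pR p.1 else 1 - pL p.1) / (1 - ν)) := by
  set u : Fin (n + 1) × Fin 2 → ℝ :=
    fun p => v0 p.1 * ((if p.2 = 0 then pR p.1 else 1 - pL p.1) / (1 - ν)) with hu
  have hC : crwC n pL pR u = u := by
    funext ⟨x, c⟩
    fin_cases c <;> simp [crwC, hu] <;> ring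
  show crwS n (crwC n pL pR u) = u
  rw [hC]
  funext ⟨x, c⟩
  have hxn : (x : ℕ) < n + 1 := x.isLt
  fin_cases c
  · by_cases h : (x : ℕ) = 0
    · have hx0 : x = (0 : Fin (n + 1)) := Fin.ext h
      simp [crwS, hu, hx0]
    · have hlt : (x : ℕ) - 1 < n := by omega
      have hh := hdb ((x : ℕ) - 1) hlt
      have hx1 : (x : ℕ) - 1 + 1 = (x : ℕ) := by omega
      rw [hx1] at hh
      simp [crwS, hu, h, mul_div_assoc']
      rw [hh]
  · by_cases h : (x : ℕ) = n
    · simp [crwS, hu, h]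
    · have hh := hdb (x : ℕ) (by omega)
      simp [crwS, hu, h, mul_div_assoc']
      rw [hh]
end

section
/- For the correlated random walk on P_{n+1} with isospectral coins (ν₂ = p_{x,L} - p_{x,R} for all x, 0 < |ν₂| < 1), the alternating vector u = (1/√2) ∑_{x=0}^{n} ((-1)^x/√(n+1)) |x⟩ ⊗ (|L⟩ - |R⟩) is an eigenvector of the time evolution operator U = SC with eigenvalue ν₂. -/
theorem stmt14 (n : ℕ) (pL pR : ℕ → ℝ) (ν : ℝ)
    (hν0 : 0 < |ν|) (hν1 : |ν| < 1) (hiso : ∀ x ≤ n, pL x - pR x = ν) :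
    crwU n pL pR
        (fun p => (-1 : ℝ) ^ (p.1 : ℕ) / Real.sqrt (n + 1) *
          ((if p.2 = 0 then 1 else -1) / Real.sqrt 2)) =
      fun p => ν * ((-1 : ℝ) ^ (p.1 : ℕ) / Real.sqrt (n + 1) *
        ((if p.2 = 0 then 1 else -1) / Real.sqrt 2)) := by
  funext p
  obtain ⟨x, c⟩ := p
  have hx : (x : ℕ) ≤ n := Nat.lt_succ_iff.mp x.isLt
  simp only [crwU, crwS, crwC]
  fin_cases c <;>
    simp only [Fin.zero_eta, Fin.mk_one, if_true, Fin.val_zero,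
      show (1 : Fin 2) ≠ 0 by decide, if_neg, if_pos rfl, ite_false, ite_true,
      pow_zero, one_ne_zero]
  · by_cases h0 : (x : ℕ) = 0
    · rw [if_pos h0, h0]
      have h := hiso 0 (Nat.zero_le n)
      simp only [Fin.val_zero, pow_zero]
      linear_combination (1 / Real.sqrt (n+1) / Real.sqrt 2) * h
    · rw [if_neg h0]
      have h := hiso ((x : ℕ) - 1) (le_trans (Nat.sub_le _ _) hx)
      have hp : ((-1 : ℝ)) ^ ((x : ℕ) - 1) * (-1) = (-1) ^ (x : ℕ) := by
        rw [← pow_succ, Nat.sub_add_cancel (Nat.one_le_iff_ne_zero.mpr h0)]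
      linear_combination (-((-1 : ℝ)) ^ ((x : ℕ) - 1) / Real.sqrt (n+1) / Real.sqrt 2) * h
        + (ν / Real.sqrt (n+1) / Real.sqrt 2) * hp
  · by_cases hn : (x : ℕ) = n
    · rw [dif_pos hn]
      have h := hiso (x : ℕ) hx
      linear_combination (-((-1 : ℝ)) ^ (x : ℕ) / Real.sqrt (n+1) / Real.sqrt 2) * h
    · rw [dif_neg hn]
      have h := hiso ((x : ℕ) + 1) (by omega)
      have hp : ((-1 : ℝ)) ^ ((x : ℕ) + 1) = -(-1) ^ (x : ℕ) := by
        rw [pow_succ]; ring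
      rw [hp]
      linear_combination (-((-1 : ℝ)) ^ (x : ℕ) / Real.sqrt (n+1) / Real.sqrt 2) * h
end

section
/- Let v ∈ ℝ^{n+1} be a unit vector, let a = (1/√2) ∑_{x=0}^{n} v(x) |x⟩ ⊗ (|L⟩ - |R⟩), and let b = Sa where S is the CRW shift operator on P_{n+1}. Then ⟨a, b⟩ = -∑_{x=1}^{n} v(x-1)v(x) + (1/2)(v(0)² + v(n)²), and ‖a‖ = ‖b‖ = 1. -/
lemma crwS_succ_L (n : ℕ) (A : Fin (n + 1) × Fin 2 → ℝ) (x : Fin n) :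
    crwS n A (x.succ, 0) = A (x.castSucc, 1) := by
  simp [crwS]; rfl

lemma crwS_zero_L (n : ℕ) (A : Fin (n + 1) × Fin 2 → ℝ) :
    crwS n A (0, 0) = A (0, 0) := by simp [crwS]

lemma crwS_castSucc_R (n : ℕ) (A : Fin (n + 1) × Fin 2 → ℝ) (x : Fin n) :
    crwS n A (x.castSucc, 1) = A (x.succ, 0) := by
  simp [crwS]; rw [dif_neg x.isLt.ne]; rfl

lemma crwS_last_R (n : ℕ) (A : Fin (n + 1) × Fin 2 → ℝ) :
    crwS n A (Fin.last n, 1) = A (Fin.last n, 1) := by simp [crwS]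

lemma sum_split16 (n : ℕ) (f : Fin (n + 1) × Fin 2 → ℝ) :
    (∑ p, f p) = (f (0, 0) + ∑ x : Fin n, f (x.succ, 0)) +
      ((∑ x : Fin n, f (x.castSucc, 1)) + f (Fin.last n, 1)) := by
  rw [Fintype.sum_prod_type_right, Fin.sum_univ_two]
  congr 1
  · rw [Fin.sum_univ_succ]
  · rw [Fin.sum_univ_castSucc]

theorem stmt16 (n : ℕ) (v : Fin (n + 1) → ℝ) (hv : ∑ x, v x ^ 2 = 1)
    (a b : Fin (n + 1) × Fin 2 → ℝ)
    (ha : a = fun p => v p.1 * ((if p.2 = 0 then 1 else -1) / Real.sqrt 2))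
    (hb : b = crwS n a) :
    (∑ p, a p * b p) =
      (-∑ x : Fin n, v x.castSucc * v x.succ) +
        (v 0 ^ 2 + v (Fin.last n) ^ 2) / 2 ∧
    Real.sqrt (∑ p, a p ^ 2) = 1 ∧ Real.sqrt (∑ p, b p ^ 2) = 1 := by
  have hs : Real.sqrt 2 * Real.sqrt 2 = 2 := Real.mul_self_sqrt (by norm_num)
  have hsne : Real.sqrt 2 ≠ 0 := by positivity
  have hv1 : v 0 ^ 2 + ∑ x : Fin n, v x.succ ^ 2 = 1 := by
    rw [← hv, Fin.sum_univ_succ]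
  have hv2 : (∑ x : Fin n, v x.castSucc ^ 2) + v (Fin.last n) ^ 2 = 1 := by
    rw [← hv, Fin.sum_univ_castSucc]
  have haL : ∀ x : Fin (n + 1), a (x, 0) = v x / Real.sqrt 2 := by
    intro x; rw [ha]; simp; ring
  have haR : ∀ x : Fin (n + 1), a (x, 1) = -(v x / Real.sqrt 2) := by
    intro x; rw [ha]; simp; ring
  have half : ∀ u w : ℝ, (u / Real.sqrt 2) * (w / Real.sqrt 2) = u * w / 2 := by
    intro u w
    rw [div_mul_div_comm, hs]
  have h2 : Real.sqrt 2 ^ 2 = 2 := Real.sq_sqrt (by norm_num)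
  refine ⟨?_, ?_, ?_⟩
  · rw [sum_split16, hb, crwS_zero_L, crwS_last_R]
    simp only [crwS_succ_L, crwS_castSucc_R, haL, haR]
    simp only [mul_neg, neg_mul, half, neg_neg]
    have e1 : (∑ x : Fin n, -(v x.succ * v x.castSucc / 2)) +
        ∑ x : Fin n, -(v x.castSucc * v x.succ / 2) =
        -∑ x : Fin n, v x.castSucc * v x.succ := by
      rw [← Finset.sum_add_distrib, ← Finset.sum_neg_distrib]
      exact Finset.sum_congr rfl fun x _ => by ring
    linear_combination e1
  · rw [sum_split16]
    simp only [haL, haR, neg_sq, div_pow, h2]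
    have e : v 0 ^ 2 / 2 + (∑ x : Fin n, v x.succ ^ 2 / 2) +
        ((∑ x : Fin n, v x.castSucc ^ 2 / 2) + v (Fin.last n) ^ 2 / 2) = 1 := by
      rw [← Finset.sum_div, ← Finset.sum_div]; linarith
    rw [e, Real.sqrt_one]
  · rw [sum_split16, hb, crwS_zero_L, crwS_last_R]
    simp only [crwS_succ_L, crwS_castSucc_R, haL, haR]
    simp only [neg_sq, div_pow, h2]
    have e : v 0 ^ 2 / 2 + (∑ x : Fin n, v x.castSucc ^ 2 / 2) +
        ((∑ x : Fin n, v x.succ ^ 2 / 2) + v (Fin.last n) ^ 2 / 2) = 1 := by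
      rw [← Finset.sum_div, ← Finset.sum_div]; linarith
    rw [e, Real.sqrt_one]
end

section
/- Let v be a unit eigenvector of the Jacobi-type matrix B (with B_{i,i-1} = q_i(L)/√2, B_{i,i+1} = -q_i(R)/√2, B_{0,0} = -q_0(L)/√2, B_{n,n} = q_n(R)/√2, q_x(L) - q_x(R) = √2, q_x(L) ≥ 0 ≥ q_x(R)) with eigenvalue λ, and define a = (1/√2)∑_x v(x)|x⟩⊗(|L⟩-|R⟩) and b = Sa. Then a and b are linearly dependent if and only if λ = -1, in which case v(x) = ±(-1)^x/√(n+1) and b = a. -/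
/-- The Jacobi-type matrix `B` associated to the CRW on the path `P_{n+1}`. -/
noncomputable def jacB (n : ℕ) (qL qR : ℕ → ℝ) : Matrix (Fin (n + 1)) (Fin (n + 1)) ℝ :=
  Matrix.of fun i j =>
    if (j : ℕ) + 1 = (i : ℕ) then qL i / Real.sqrt 2
    else if (i : ℕ) + 1 = (j : ℕ) then -qR i / Real.sqrt 2
    else if (i : ℕ) = 0 ∧ (j : ℕ) = 0 then -qL 0 / Real.sqrt 2
    else if (i : ℕ) = n ∧ (j : ℕ) = n then qR n / Real.sqrt 2
    else 0

/-!
The shift `S` sends the `L`-component of `a = v ⊗ (|L⟩ - |R⟩)/√2` at site `x + 1` to the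
`R`-component at `x`, and vice versa, so comparing components shows that `S a = c • a` forces
`c = 1` and `v (x + 1) = -v x`; conversely an alternating `v` gives `S a = a`.

On the other side, since `q_x(L) - q_x(R) = √2`, as soon as `v` alternates below `i` the `i`-th
row of `B v` equals `-v i - q_i(R)/√2 · (v (i + 1) + v i)`. As `q_i(R) ≠ 0`, the eigenvalue
`λ = -1` forces alternation one site at a time, and alternation forces `λ v 0 = -v 0` from the
first row. An alternating unit vector is `±((-1)^x)/√(n + 1)`.
-/

theorem eq_pow_mul_of_succ_eq_mul {M : Type*} [Monoid M] {n : ℕ} {v : Fin (n + 1) → M} {k : M}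
    (h : ∀ i : Fin n, v i.succ = k * v i.castSucc) (x : Fin (n + 1)) :
    v x = k ^ (x : ℕ) * v 0 := by
  induction x using Fin.induction with
  | zero => simp
  | succ i ih => rw [h, ih, Fin.val_succ, Fin.val_castSucc, pow_succ', mul_assoc]

theorem apply_zero_ne_zero_of_succ_eq_mul {M : Type*} [MonoidWithZero M] {n : ℕ}
    {v : Fin (n + 1) → M} {k : M} (h : ∀ i : Fin n, v i.succ = k * v i.castSucc) (hv : v ≠ 0) :
    v 0 ≠ 0 := fun h0 =>
  hv (funext fun x => by rw [eq_pow_mul_of_succ_eq_mul h x, h0, mul_zero, Pi.zero_apply])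

section crwS

variable {n : ℕ} (ψ : Fin (n + 1) × Fin 2 → ℝ)

theorem crwS_zero_left : crwS n ψ (0, 0) = ψ (0, 0) := rfl

theorem crwS_succ_left (i : Fin n) : crwS n ψ (i.succ, 0) = ψ (i.castSucc, 1) := rfl

theorem crwS_last_right : crwS n ψ (Fin.last n, 1) = ψ (Fin.last n, 1) := dif_pos rfl

theorem crwS_castSucc_right (i : Fin n) : crwS n ψ (i.castSucc, 1) = ψ (i.succ, 0) :=
  dif_neg i.isLt.ne

end crwS

noncomputable def antisymLift {n : ℕ} (v : Fin (n + 1) → ℝ) : Fin (n + 1) × Fin 2 → ℝ :=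
  fun p => v p.1 * ((if p.2 = 0 then 1 else -1) / Real.sqrt 2)

section antisymLift

variable {n : ℕ} {v : Fin (n + 1) → ℝ}

theorem antisymLift_apply_left (x : Fin (n + 1)) : antisymLift v (x, 0) = v x / Real.sqrt 2 := by
  simp [antisymLift, div_eq_mul_inv]

theorem antisymLift_apply_right (x : Fin (n + 1)) :
    antisymLift v (x, 1) = -v x / Real.sqrt 2 := by
  simp [antisymLift, div_eq_mul_inv]

theorem antisymLift_ne_zero (hv : v ≠ 0) : antisymLift v ≠ 0 := by
  obtain ⟨x, hx⟩ := Function.ne_iff.mp hv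
  refine Function.ne_iff.mpr ⟨(x, 0), ?_⟩
  rw [antisymLift_apply_left]
  exact div_ne_zero hx (by positivity)

theorem crwS_antisymLift_of_alternating (h : ∀ i : Fin n, v i.succ = -v i.castSucc) :
    crwS n (antisymLift v) = antisymLift v := by
  funext ⟨y, c⟩
  match c with
  | 0 =>
    cases y using Fin.cases with
    | zero => rfl
    | succ i => rw [crwS_succ_left, antisymLift_apply_right, antisymLift_apply_left, h]
  | 1 =>
    cases y using Fin.lastCases with
    | last => exact crwS_last_right _
    | cast i => rw [crwS_castSucc_right, antisymLift_apply_left, antisymLift_apply_right, h]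

theorem crwS_antisymLift_eq_smul {c : ℝ} (h : crwS n (antisymLift v) = c • antisymLift v) :
    (c - 1) * v 0 = 0 ∧ ∀ i : Fin n, v i.succ = -c * v i.castSucc := by
  refine ⟨?_, fun i => ?_⟩
  · have h0 := congrFun h (0, 0)
    rw [crwS_zero_left, Pi.smul_apply, antisymLift_apply_left, smul_eq_mul] at h0
    field_simp at h0
    linear_combination -h0
  · have hi := congrFun h (i.castSucc, 1)
    rw [crwS_castSucc_right, Pi.smul_apply, antisymLift_apply_left, antisymLift_apply_right,
      smul_eq_mul] at hi
    field_simp at hi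
    linear_combination hi

theorem alternating_of_crwS_antisymLift_eq_smul (hv : v ≠ 0) {c : ℝ}
    (h : crwS n (antisymLift v) = c • antisymLift v) : ∀ i : Fin n, v i.succ = -v i.castSucc := by
  obtain ⟨h0, hstep⟩ := crwS_antisymLift_eq_smul h
  obtain rfl : c = 1 :=
    sub_eq_zero.mp ((mul_eq_zero.mp h0).resolve_right (apply_zero_ne_zero_of_succ_eq_mul hstep hv))
  simpa using hstep

theorem not_linearIndependent_antisymLift_iff (hv : v ≠ 0) :
    ¬ LinearIndependent ℝ ![antisymLift v, crwS n (antisymLift v)] ↔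
      ∀ i : Fin n, v i.succ = -v i.castSucc := by
  rw [LinearIndependent.pair_iff' (antisymLift_ne_zero hv), not_forall_not]
  constructor
  · rintro ⟨c, hc⟩
    exact alternating_of_crwS_antisymLift_eq_smul hv hc.symm
  · intro h
    exact ⟨1, by rw [one_smul, crwS_antisymLift_of_alternating h]⟩

end antisymLift

section jacB

variable {n : ℕ} {qL qR : ℕ → ℝ} {v : Fin (n + 1) → ℝ}

/-- For `i = 0` the index `i - 1` truncates to `0`, where the entry `-qL 0 / √2` sits. -/
theorem jacB_mulVec_castSucc (i : Fin n) :
    (jacB n qL qR).mulVec v i.castSucc =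
      (if (i : ℕ) = 0 then -qL 0 else qL i) / Real.sqrt 2 * v ⟨i - 1, by omega⟩ +
        -qR i / Real.sqrt 2 * v i.succ := by
  have hi := i.isLt
  rw [Matrix.mulVec, dotProduct, Fintype.sum_eq_add ⟨i - 1, by omega⟩ i.succ
    (by simp [Fin.ext_iff])]
  · congr 2
    · simp only [jacB, Matrix.of_apply, Fin.val_castSucc]
      split_ifs <;> first | rfl | omega
    · simp only [jacB, Matrix.of_apply, Fin.val_castSucc, Fin.val_succ]
      split_ifs <;> first | rfl | omega
  · rintro j ⟨h1, h2⟩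
    simp only [Fin.ext_iff, Fin.val_succ, ne_eq] at h1 h2
    simp only [jacB, Matrix.of_apply, Fin.val_castSucc]
    rw [if_neg (by omega), if_neg (by omega), if_neg (by omega), if_neg (by omega), zero_mul]

theorem jacB_mulVec_castSucc_of_alternating_lt (i : Fin n)
    (h : ∀ j < i, v j.succ = -v j.castSucc) :
    (jacB n qL qR).mulVec v i.castSucc =
      -qL i / Real.sqrt 2 * v i.castSucc + -qR i / Real.sqrt 2 * v i.succ := by
  rw [jacB_mulVec_castSucc]
  congr 1
  split_ifs with h0
  · have hi : i.castSucc = ⟨i - 1, by omega⟩ := Fin.ext (by simp [h0])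
    rw [← hi, h0]
  · have hprev : (⟨i - 1, by omega⟩ : Fin n).succ = i.castSucc := Fin.ext (Nat.sub_one_add_one h0)
    rw [← hprev, h _ (Fin.mk_lt_of_lt_val (by omega)), neg_div, neg_mul_neg]
    rfl

theorem jacB_mulVec_castSucc_eq_neg_iff (hq : ∀ x < n, qL x - qR x = Real.sqrt 2)
    (hqR : ∀ x < n, qR x ≠ 0) :
    (∀ i : Fin n, (jacB n qL qR).mulVec v i.castSucc = -v i.castSucc) ↔
      ∀ i : Fin n, v i.succ = -v i.castSucc := by
  have hrow : ∀ i : Fin n, (∀ j < i, v j.succ = -v j.castSucc) →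
      (jacB n qL qR).mulVec v i.castSucc + v i.castSucc =
        -qR i / Real.sqrt 2 * (v i.succ + v i.castSucc) := by
    intro i h
    rw [jacB_mulVec_castSucc_of_alternating_lt i h]
    have hqi : (qL i - qR i) / Real.sqrt 2 = 1 := by rw [hq i i.isLt, div_self (by positivity)]
    linear_combination (-v i.castSucc) * hqi
  constructor
  · intro hB i
    induction i using WellFoundedLT.induction with
    | _ i ih =>
      have hi := hrow i ih
      rw [hB, neg_add_cancel, eq_comm, mul_eq_zero] at hi
      have hqi : -qR i / Real.sqrt 2 ≠ 0 :=
        div_ne_zero (neg_ne_zero.mpr (hqR i i.isLt)) (by positivity)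
      linear_combination hi.resolve_left hqi
  · intro h i
    have hi := hrow i fun j _ => h j
    rw [h] at hi
    linear_combination hi

end jacB

theorem eq_neg_one_iff_alternating_of_jacB_mulVec_eq_smul {n : ℕ} {qL qR : ℕ → ℝ}
    {v : Fin (n + 1) → ℝ} {lam : ℝ} (hn : 0 < n) (hq : ∀ x < n, qL x - qR x = Real.sqrt 2)
    (hqR : ∀ x < n, qR x ≠ 0) (hv : v ≠ 0) (heig : (jacB n qL qR).mulVec v = lam • v) :
    lam = -1 ↔ ∀ i : Fin n, v i.succ = -v i.castSucc := by
  have key := jacB_mulVec_castSucc_eq_neg_iff (v := v) hq hqR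
  simp only [heig, Pi.smul_apply, smul_eq_mul] at key
  rw [← key]
  constructor
  · rintro rfl i
    ring
  · intro h
    have hv0 := apply_zero_ne_zero_of_succ_eq_mul (k := -1) (by simpa using key.mp h) hv
    exact mul_right_cancel₀ hv0 (by simpa using h ⟨0, hn⟩)

theorem alternating_eq_or_eq_neg_of_sum_sq_eq_one {n : ℕ} {v : Fin (n + 1) → ℝ}
    (h : ∀ i : Fin n, v i.succ = -v i.castSucc) (hv : ∑ x, v x ^ 2 = 1) :
    (∀ x : Fin (n + 1), v x = (-1 : ℝ) ^ (x : ℕ) / Real.sqrt (n + 1)) ∨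
      (∀ x : Fin (n + 1), v x = -((-1 : ℝ) ^ (x : ℕ) / Real.sqrt (n + 1))) := by
  have hx : ∀ x, v x = (-1) ^ (x : ℕ) * v 0 := eq_pow_mul_of_succ_eq_mul (by simpa using h)
  have hsq : v 0 ^ 2 = (1 / Real.sqrt (n + 1)) ^ 2 := by
    have hsq_eq : ∀ x, v x ^ 2 = v 0 ^ 2 := fun x => by
      rw [hx x, mul_pow, ← pow_mul, pow_mul', neg_one_sq, one_pow, one_mul]
    simp only [hsq_eq, Finset.sum_const, Finset.card_univ, Fintype.card_fin, nsmul_eq_mul] at hv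
    rw [div_pow, Real.sq_sqrt (by positivity), eq_div_iff (by positivity)]
    push_cast at hv
    linear_combination hv
  rcases sq_eq_sq_iff_eq_or_eq_neg.mp hsq with h0 | h0
  · exact Or.inl fun x => by rw [hx x, h0]; ring
  · exact Or.inr fun x => by rw [hx x, h0]; ring

theorem stmt17_general (n : ℕ) (hn : 1 ≤ n) (pL pR : ℕ → ℝ) (ν : ℝ)
    (hR : ∀ y ≤ n, 0 < pR y ∧ pR y < 1)
    (hν1 : |ν| < 1) (hiso : ∀ x ≤ n, pL x - pR x = ν)
    (qL qR : ℕ → ℝ)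
    (hqL : ∀ x, qL x = Real.sqrt 2 * (1 - pL x) / (1 - ν))
    (hqR : ∀ x, qR x = -(Real.sqrt 2 * pR x) / (1 - ν))
    (v : Fin (n + 1) → ℝ) (hv : ∑ x, v x ^ 2 = 1) (lam : ℝ)
    (heig : (jacB n qL qR).mulVec v = lam • v)
    (a b : Fin (n + 1) × Fin 2 → ℝ)
    (ha : a = fun p => v p.1 * ((if p.2 = 0 then 1 else -1) / Real.sqrt 2))
    (hb : b = crwS n a) :
    (¬ LinearIndependent ℝ ![a, b] ↔ lam = -1) ∧
    (lam = -1 →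
      ((∀ x : Fin (n + 1), v x = (-1 : ℝ) ^ (x : ℕ) / Real.sqrt (n + 1)) ∨
        (∀ x : Fin (n + 1), v x = -((-1 : ℝ) ^ (x : ℕ) / Real.sqrt (n + 1)))) ∧
      b = a) := by
  have hν : 0 < 1 - ν := by linarith [le_abs_self ν]
  have hq : ∀ x < n, qL x - qR x = Real.sqrt 2 := fun x hx => by
    rw [hqL, hqR, div_sub_div_same, div_eq_iff hν.ne']
    linear_combination -Real.sqrt 2 * hiso x hx.le
  have hqR0 : ∀ x < n, qR x ≠ 0 := fun x hx => by
    have := (hR x hx.le).1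
    rw [hqR]
    exact div_ne_zero (neg_ne_zero.mpr (by positivity)) hν.ne'
  have hv0 : v ≠ 0 := by
    rintro rfl
    simp at hv
  have hlam := eq_neg_one_iff_alternating_of_jacB_mulVec_eq_smul hn hq hqR0 hv0 heig
  obtain rfl : a = antisymLift v := ha
  subst hb
  exact ⟨(not_linearIndependent_antisymLift_iff hv0).trans hlam.symm, fun h =>
    ⟨alternating_eq_or_eq_neg_of_sum_sq_eq_one (hlam.mp h) hv,
      crwS_antisymLift_of_alternating (hlam.mp h)⟩⟩

theorem stmt17 (n : ℕ) (hn : 1 ≤ n) (pL pR : ℕ → ℝ) (ν : ℝ)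
    (hL : ∀ y ≤ n, 0 < pL y ∧ pL y < 1) (hR : ∀ y ≤ n, 0 < pR y ∧ pR y < 1)
    (hν0 : 0 < |ν|) (hν1 : |ν| < 1) (hiso : ∀ x ≤ n, pL x - pR x = ν)
    (qL qR : ℕ → ℝ)
    (hqL : ∀ x, qL x = Real.sqrt 2 * (1 - pL x) / (1 - ν))
    (hqR : ∀ x, qR x = -(Real.sqrt 2 * pR x) / (1 - ν))
    (v : Fin (n + 1) → ℝ) (hv : ∑ x, v x ^ 2 = 1) (lam : ℝ)
    (heig : (jacB n qL qR).mulVec v = lam • v)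
    (a b : Fin (n + 1) × Fin 2 → ℝ)
    (ha : a = fun p => v p.1 * ((if p.2 = 0 then 1 else -1) / Real.sqrt 2))
    (hb : b = crwS n a) :
    (¬ LinearIndependent ℝ ![a, b] ↔ lam = -1) ∧
    (lam = -1 →
      ((∀ x : Fin (n + 1), v x = (-1 : ℝ) ^ (x : ℕ) / Real.sqrt (n + 1)) ∨
        (∀ x : Fin (n + 1), v x = -((-1 : ℝ) ^ (x : ℕ) / Real.sqrt (n + 1)))) ∧
      b = a) :=
  stmt17_general n hn pL pR ν hR hν1 hiso qL qR hqL hqR v hv lam heig a b ha hb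
end

section
/- Under the assumptions 0 < p_{x,L}, p_{x,R} < 1, ν₂ = p_{x,L} - p_{x,R} constant with 0 < |ν₂| < 1, and (if ν₂ < 0) every eigenvalue λ of B satisfies √(-4ν₂)/(1-ν₂) < |λ| ≤ 1, the limiting distribution of the CRW on P_{n+1} exists, is independent of the initial state, and is given by p_∞(0) = (1 + ∑_{x=1}^n ∏_{y=0}^{x-1}(1-p_{y,L})/∏_{y=1}^x p_{y,R})⁻¹ and p_∞(x) = (∏_{y=0}^{x-1}(1-p_{y,L})/∏_{y=1}^x p_{y,R}) · p_∞(0). -/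
/-- The ratio `∏_{y=0}^{x-1}(1-p_{y,L}) / ∏_{y=1}^{x} p_{y,R}`. -/
noncomputable def crwRatio (pL pR : ℕ → ℝ) (x : ℕ) : ℝ :=
  (∏ y ∈ Finset.range x, (1 - pL y)) / ∏ y ∈ Finset.Icc 1 x, pR y

/-- The limiting distribution `p_∞` of the CRW on `P_{n+1}`. -/
noncomputable def crwLimit (n : ℕ) (pL pR : ℕ → ℝ) (x : ℕ) : ℝ :=
  crwRatio pL pR x * (1 + ∑ z ∈ Finset.Icc 1 n, crwRatio pL pR z)⁻¹

/-!
The walk is a Markov chain on the states `(x, c)` whose transition matrix is column-stochastic.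
Every state reaches, and is reached from, the state `(0, L)`, which carries a loop; hence some
power of the matrix is entrywise positive, and Doeblin's argument contracts every vector of
sum zero geometrically in `ℓ¹`. So `U^t φ` converges to the stationary distribution of mass one.
That distribution is explicit: at site `x` it is proportional to `crwRatio x • (p_{x,R}, 1 - p_{x,L})`,
which every coin fixes and the shift preserves, and `p_{x,L} - p_{x,R} = ν` makes its site
marginals proportional to `crwRatio x`.
-/

open Filter Topology

namespace Matrix

section Positivity

variable {ι R : Type*} [Fintype ι] [DecidableEq ι] [Ring R] [LinearOrder R]
  [IsStrictOrderedRing R]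

lemma mul_apply_pos {l m o : Type*} [Fintype m] {A : Matrix l m R} {B : Matrix m o R}
    (hA : ∀ i j, 0 ≤ A i j) (hB : ∀ i j, 0 ≤ B i j) {i : l} {j : m} {k : o}
    (hij : 0 < A i j) (hjk : 0 < B j k) : 0 < (A * B) i k :=
  (mul_pos hij hjk).trans_le <| Finset.single_le_sum (f := fun j => A i j * B j k)
    (fun j _ => mul_nonneg (hA i j) (hB j k)) (Finset.mem_univ j)

lemma pow_add_apply_pos {A : Matrix ι ι R} (hA : ∀ i j, 0 ≤ A i j) {s t : ℕ} {i j k : ι}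
    (hij : 0 < (A ^ s) i j) (hjk : 0 < (A ^ t) j k) : 0 < (A ^ (s + t)) i k := by
  rw [pow_add]
  exact mul_apply_pos (pow_apply_nonneg hA s) (pow_apply_nonneg hA t) hij hjk

lemma pow_apply_self_pos {A : Matrix ι ι R} (hA : ∀ i j, 0 ≤ A i j) {o : ι} (ho : 0 < A o o)
    (t : ℕ) : 0 < (A ^ t) o o := by
  induction t with
  | zero => simp
  | succ t ih =>
    rw [pow_succ]
    exact mul_apply_pos (pow_apply_nonneg hA t) hA ih ho

/-- Paths through the hub `o` are padded to a common length with the loop at `o`. -/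
theorem isPrimitive_of_apply_self_pos {A : Matrix ι ι R} (hA : ∀ i j, 0 ≤ A i j) {o : ι}
    (ho : 0 < A o o) (N : ℕ) (hi : ∀ i, ∃ s ≤ N, 0 < (A ^ s) i o)
    (hj : ∀ j, ∃ s ≤ N, 0 < (A ^ s) o j) : A.IsPrimitive := by
  refine ⟨hA, 2 * N + 1, by omega, fun i j => ?_⟩
  obtain ⟨s, hsN, hs⟩ := hi i
  obtain ⟨u, huN, hu⟩ := hj j
  have h := pow_add_apply_pos hA
    (pow_add_apply_pos hA hs (pow_apply_self_pos hA ho (2 * N + 1 - s - u))) hu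
  rwa [show s + (2 * N + 1 - s - u) + u = 2 * N + 1 by omega] at h

end Positivity

section Contraction

variable {ι R : Type*} [Fintype ι] [Ring R] [LinearOrder R] [IsStrictOrderedRing R]

lemma sum_abs_mulVec_le {A : Matrix ι ι R} (hA : ∀ i j, 0 ≤ A i j) {c : R}
    (hc : ∀ j, ∑ i, A i j ≤ c) (v : ι → R) : ∑ i, |(A *ᵥ v) i| ≤ c * ∑ j, |v j| :=
  calc ∑ i, |(A *ᵥ v) i| ≤ ∑ i, ∑ j, A i j * |v j| := by
        gcongr with i
        refine (Finset.abs_sum_le_sum_abs _ _).trans_eq ?_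
        simp [abs_mul, abs_of_nonneg (hA i _)]
    _ = ∑ j, (∑ i, A i j) * |v j| := by rw [Finset.sum_comm]; simp [Finset.sum_mul]
    _ ≤ ∑ j, c * |v j| := by gcongr with j; exact hc j
    _ = c * ∑ j, |v j| := (Finset.mul_sum ..).symm

variable [DecidableEq ι]

lemma card_mul_le_one_of_le_apply [Nonempty ι] {A : Matrix ι ι R} (hA : A ∈ colStochastic R ι)
    {ε : R} (hε : ∀ i j, ε ≤ A i j) : Fintype.card ι * ε ≤ 1 := by
  obtain ⟨j⟩ := ‹Nonempty ι›
  calc Fintype.card ι * ε = ∑ _i : ι, ε := by simp [nsmul_eq_mul]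
    _ ≤ ∑ i, A i j := by gcongr with i; exact hε i j
    _ = 1 := sum_col_of_mem_colStochastic hA j

/-- Doeblin's contraction estimate. -/
lemma sum_abs_mulVec_le_of_le_apply {A : Matrix ι ι R} (hA : A ∈ colStochastic R ι) {ε : R}
    (hε : ∀ i j, ε ≤ A i j) {v : ι → R} (hv : ∑ j, v j = 0) :
    ∑ i, |(A *ᵥ v) i| ≤ (1 - Fintype.card ι * ε) * ∑ j, |v j| := by
  -- subtracting `ε` from every entry does not change `A *ᵥ v`, because `∑ v = 0`
  have hsub : A *ᵥ v = (A - of fun _ _ => ε) *ᵥ v := by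
    ext i
    simp only [mulVec, dotProduct, sub_apply, of_apply, sub_mul, Finset.sum_sub_distrib,
      ← Finset.mul_sum, hv, mul_zero, sub_zero]
  rw [hsub]
  refine sum_abs_mulVec_le (fun i j => sub_nonneg.2 (hε i j)) (fun j => ?_) v
  simp [Finset.sum_sub_distrib, sum_col_of_mem_colStochastic hA]

lemma sum_abs_pow_mulVec_le [Nonempty ι] {A : Matrix ι ι R} (hA : A ∈ colStochastic R ι)
    {k : ℕ} {ε : R} (hε : ∀ i j, ε ≤ (A ^ k) i j) {v : ι → R} (hv : ∑ j, v j = 0) (t : ℕ) :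
    ∑ i, |(A ^ t *ᵥ v) i| ≤ (1 - Fintype.card ι * ε) ^ (t / k) * ∑ j, |v j| := by
  set g : ℕ → R := fun t => ∑ i, |(A ^ t *ᵥ v) i|
  have hρ : 0 ≤ 1 - Fintype.card ι * ε :=
    sub_nonneg.2 (card_mul_le_one_of_le_apply (pow_mem hA k) hε)
  have hanti : Antitone g := antitone_nat_of_succ_le fun t => by
    have h := sum_abs_mulVec_le (mem_colStochastic_iff_sum.1 hA).1
      (fun j => (sum_col_of_mem_colStochastic hA j).le) (A ^ t *ᵥ v)
    rwa [one_mul, mulVec_mulVec, ← pow_succ'] at h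
  have hblock : ∀ m, g (k * m) ≤ (1 - Fintype.card ι * ε) ^ m * g 0 := by
    intro m
    induction m with
    | zero => simp
    | succ m ih =>
      calc g (k * (m + 1)) ≤ (1 - Fintype.card ι * ε) * g (k * m) := by
            have h := sum_abs_mulVec_le_of_le_apply (pow_mem hA k) hε
              (v := A ^ (k * m) *ᵥ v) (by rw [sum_mulVec_of_mem_colStochastic (pow_mem hA _), hv])
            rwa [mulVec_mulVec, ← pow_add, show k + k * m = k * (m + 1) by ring] at h
        _ ≤ (1 - Fintype.card ι * ε) ^ (m + 1) * g 0 := by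
            rw [pow_succ', mul_assoc]; exact mul_le_mul_of_nonneg_left ih hρ
  simpa [g] using (hanti (Nat.mul_div_le t k)).trans (hblock (t / k))

end Contraction

variable {ι : Type*} [Fintype ι] [DecidableEq ι]

theorem tendsto_pow_mulVec_zero_of_isPrimitive {A : Matrix ι ι ℝ} (hA : A ∈ colStochastic ℝ ι)
    (hprim : A.IsPrimitive) {v : ι → ℝ} (hv : ∑ j, v j = 0) :
    Tendsto (fun t => A ^ t *ᵥ v) atTop (𝓝 0) := by
  cases isEmpty_or_nonempty ι
  · exact tendsto_const_nhds.congr fun t => Subsingleton.elim _ _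
  obtain ⟨k, hk, hpos⟩ := hprim.exists_pos_pow
  obtain ⟨⟨i₀, j₀⟩, hmin⟩ := Finite.exists_min fun p : ι × ι => (A ^ k) p.1 p.2
  set ε := (A ^ k) i₀ j₀
  have hρ : Tendsto (fun t => (1 - Fintype.card ι * ε) ^ (t / k) * ∑ j, |v j|) atTop (𝓝 0) := by
    have hρ0 := sub_nonneg.2 (card_mul_le_one_of_le_apply (pow_mem hA k) fun i j => hmin (i, j))
    have hρ1 : 1 - Fintype.card ι * ε < 1 := by
      have hcard : (0 : ℝ) < Fintype.card ι := by exact_mod_cast Fintype.card_pos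
      linarith [mul_pos hcard (hpos i₀ j₀)]
    simpa using ((tendsto_pow_atTop_nhds_zero_of_lt_one hρ0 hρ1).comp
      (Nat.tendsto_div_const_atTop hk.ne')).mul_const (∑ j, |v j|)
  refine tendsto_pi_nhds.2 fun i => squeeze_zero_norm (fun t => ?_) hρ
  refine le_trans ?_ (sum_abs_pow_mulVec_le hA (fun i j => hmin (i, j)) hv t)
  exact Finset.single_le_sum (f := fun i => |(A ^ t *ᵥ v) i|) (fun _ _ => abs_nonneg _)
    (Finset.mem_univ i)

theorem tendsto_pow_mulVec_of_isPrimitive {A : Matrix ι ι ℝ} (hA : A ∈ colStochastic ℝ ι)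
    (hprim : A.IsPrimitive) {π φ : ι → ℝ} (hπ : A *ᵥ π = π) (hφ : ∑ i, φ i = ∑ i, π i) :
    Tendsto (fun t => A ^ t *ᵥ φ) atTop (𝓝 π) := by
  have hfix : ∀ t, A ^ t *ᵥ π = π := fun t => by
    induction t with
    | zero => simp
    | succ t ih => rw [pow_succ, ← mulVec_mulVec, hπ, ih]
  have h := tendsto_pow_mulVec_zero_of_isPrimitive hA hprim (v := φ - π)
    (by simp [Finset.sum_sub_distrib, hφ])
  simpa [mulVec_sub, hfix] using h.add_const π

end Matrix

namespace CRW

open Matrix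

variable (n : ℕ) (pL pR : ℕ → ℝ)

def shift : Fin (n + 1) × Fin 2 → Fin (n + 1) × Fin 2 := fun p =>
  if p.2 = 0 then
    if (p.1 : ℕ) = 0 then (0, 0) else (⟨(p.1 : ℕ) - 1, by omega⟩, 1)
  else
    if h : (p.1 : ℕ) = n then (p.1, 1) else (⟨(p.1 : ℕ) + 1, by omega⟩, 0)

lemma crwS_apply (ψ : Fin (n + 1) × Fin 2 → ℝ) (p : Fin (n + 1) × Fin 2) :
    crwS n ψ p = ψ (shift n p) := by
  unfold crwS shift
  split_ifs <;> rfl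

lemma shift_involutive : Function.Involutive (shift n) := by
  rintro ⟨⟨x, hx⟩, c⟩
  obtain rfl | rfl : c = 0 ∨ c = 1 := by omega
  all_goals simp only [shift]; split_ifs <;> simp_all [Prod.ext_iff, Fin.ext_iff] <;> omega

lemma shift_zero : shift n (0, 0) = (0, 0) := by
  simp [shift]

lemma shift_succ_left (x : ℕ) (hx : x + 1 < n + 1) :
    shift n (⟨x + 1, hx⟩, 0) = (⟨x, by omega⟩, 1) := by
  simp [shift]

lemma shift_right_of_lt (x : ℕ) (hx : x < n) :
    shift n (⟨x, by omega⟩, 1) = (⟨x + 1, by omega⟩, 0) := by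
  simp [shift, hx.ne]

lemma shift_last_right : shift n (Fin.last n, 1) = (Fin.last n, 1) := by
  simp [shift]

lemma sum_crwU (ψ : Fin (n + 1) × Fin 2 → ℝ) : ∑ p, crwU n pL pR ψ p = ∑ p, ψ p := by
  simp only [crwU, crwS_apply]
  rw [(shift_involutive n).bijective.sum_comp (crwC n pL pR ψ), Fintype.sum_prod_type,
    Fintype.sum_prod_type]
  refine Finset.sum_congr rfl fun x _ => ?_
  simp [crwC]
  ring

def crwUₗ : (Fin (n + 1) × Fin 2 → ℝ) →ₗ[ℝ] (Fin (n + 1) × Fin 2 → ℝ) where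
  toFun := crwU n pL pR
  map_add' ψ χ := by
    funext p
    simp only [crwU, crwS, crwC, Pi.add_apply]
    split_ifs <;> ring
  map_smul' c ψ := by
    funext p
    simp only [crwU, crwS, crwC, Pi.smul_apply, smul_eq_mul, RingHom.id_apply]
    split_ifs <;> ring

/-- The transition matrix of the walk: its `(p, q)` entry is the probability of moving from
state `q` to state `p`. -/
def transMatrix : Matrix (Fin (n + 1) × Fin 2) (Fin (n + 1) × Fin 2) ℝ :=
  LinearMap.toMatrix' (crwUₗ n pL pR)

lemma transMatrix_mulVec (ψ : Fin (n + 1) × Fin 2 → ℝ) :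
    transMatrix n pL pR *ᵥ ψ = crwU n pL pR ψ :=
  LinearMap.toMatrix'_mulVec _ ψ

lemma transMatrix_pow_mulVec (t : ℕ) (ψ : Fin (n + 1) × Fin 2 → ℝ) :
    transMatrix n pL pR ^ t *ᵥ ψ = (crwU n pL pR)^[t] ψ := by
  induction t generalizing ψ with
  | zero => simp
  | succ t ih =>
    rw [pow_succ', ← mulVec_mulVec, ih, Function.iterate_succ_apply', transMatrix_mulVec]

lemma transMatrix_apply (p q : Fin (n + 1) × Fin 2) :
    transMatrix n pL pR p q = crwU n pL pR (Pi.single q 1) p :=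
  LinearMap.toMatrix'_apply _ _ _

section Positivity

variable {n pL pR} (hL : ∀ y ≤ n, 0 < pL y ∧ pL y < 1) (hR : ∀ y ≤ n, 0 < pR y ∧ pR y < 1)
include hL hR

lemma crwC_nonneg {ψ : Fin (n + 1) × Fin 2 → ℝ} (hψ : 0 ≤ ψ) (p : Fin (n + 1) × Fin 2) :
    0 ≤ crwC n pL pR ψ p := by
  obtain ⟨hL0, hL1⟩ := hL p.1 (Nat.lt_succ_iff.1 p.1.2)
  obtain ⟨hR0, hR1⟩ := hR p.1 (Nat.lt_succ_iff.1 p.1.2)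
  have h0 : 0 ≤ ψ (p.1, 0) := hψ _
  have h1 : 0 ≤ ψ (p.1, 1) := hψ _
  unfold crwC
  split_ifs <;> apply add_nonneg <;> apply mul_nonneg <;> linarith

lemma crwC_single_pos (q : Fin (n + 1) × Fin 2) (d : Fin 2) :
    0 < crwC n pL pR (Pi.single q 1) (q.1, d) := by
  obtain ⟨hL0, hL1⟩ := hL q.1 (Nat.lt_succ_iff.1 q.1.2)
  obtain ⟨hR0, hR1⟩ := hR q.1 (Nat.lt_succ_iff.1 q.1.2)
  obtain ⟨x, c⟩ := q
  obtain rfl | rfl : c = 0 ∨ c = 1 := by omega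
  all_goals obtain rfl | rfl : d = 0 ∨ d = 1 := by omega
  all_goals simp [crwC]; linarith

lemma transMatrix_nonneg (p q : Fin (n + 1) × Fin 2) : 0 ≤ transMatrix n pL pR p q := by
  rw [transMatrix_apply, crwU, crwS_apply]
  exact crwC_nonneg hL hR (Pi.single_nonneg.2 zero_le_one) _

lemma transMatrix_mem_colStochastic :
    transMatrix n pL pR ∈ colStochastic ℝ (Fin (n + 1) × Fin 2) :=
  mem_colStochastic_iff_sum.2 ⟨transMatrix_nonneg hL hR, fun q => by
    simp [transMatrix_apply, sum_crwU]⟩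

/-- State `p` is fed only through the coin at the site of `shift n p`, and all coin entries
are positive. -/
lemma transMatrix_apply_pos {p q : Fin (n + 1) × Fin 2} (h : (shift n p).1 = q.1) :
    0 < transMatrix n pL pR p q := by
  rw [transMatrix_apply, crwU, crwS_apply, ← Prod.mk.eta (p := shift n p), h]
  exact crwC_single_pos hL hR q _

lemma transMatrix_pow_apply_zero_pos (x : ℕ) (hx : x < n + 1) (c : Fin 2) :
    0 < (transMatrix n pL pR ^ (x + 1)) (0, 0) (⟨x, hx⟩, c) := by
  have hM := transMatrix_nonneg hL hR
  induction x generalizing c with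
  | zero =>
    rw [pow_one]
    exact transMatrix_apply_pos hL hR (by rw [shift_zero]; rfl)
  | succ x ih =>
    rw [pow_succ]
    exact mul_apply_pos (pow_apply_nonneg hM _) hM (ih (by omega) 1)
      (transMatrix_apply_pos hL hR (by rw [shift_right_of_lt n x (by omega)]))

lemma transMatrix_pow_apply_left_pos (x : ℕ) (hx : x < n + 1) :
    0 < (transMatrix n pL pR ^ x) (⟨x, hx⟩, 0) (0, 0) := by
  have hM := transMatrix_nonneg hL hR
  induction x with
  | zero => simp
  | succ x ih =>
    rw [pow_succ']
    have hedge : 0 < transMatrix n pL pR (⟨x + 1, hx⟩, 0) (⟨x, by omega⟩, 0) :=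
      transMatrix_apply_pos hL hR (by rw [shift_succ_left])
    exact mul_apply_pos hM (pow_apply_nonneg hM _) hedge (ih (by omega))

lemma transMatrix_isPrimitive : (transMatrix n pL pR).IsPrimitive := by
  have hM := transMatrix_nonneg hL hR
  refine isPrimitive_of_apply_self_pos hM (o := (0, 0))
    (transMatrix_apply_pos hL hR (by rw [shift_zero])) (n + 1) ?_ ?_
  · rintro ⟨⟨x, hx⟩, c⟩
    obtain rfl | rfl : c = 0 ∨ c = 1 := by omega
    · exact ⟨x, by omega, transMatrix_pow_apply_left_pos hL hR x hx⟩
    obtain hlt | heq : x < n ∨ x = n := by omega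
    · have hedge : 0 < transMatrix n pL pR (⟨x, hx⟩, 1) (⟨x + 1, by omega⟩, 0) :=
        transMatrix_apply_pos hL hR (by rw [shift_right_of_lt n x hlt])
      refine ⟨x + 2, by omega, ?_⟩
      rw [pow_succ']
      exact mul_apply_pos hM (pow_apply_nonneg hM _) hedge
        (transMatrix_pow_apply_left_pos hL hR (x + 1) _)
    · have hlast : (⟨x, hx⟩ : Fin (n + 1)) = Fin.last n := Fin.ext heq
      have hedge : 0 < transMatrix n pL pR (⟨x, hx⟩, 1) (⟨x, hx⟩, 0) :=
        transMatrix_apply_pos hL hR (by rw [hlast, shift_last_right])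
      refine ⟨x + 1, by omega, ?_⟩
      rw [pow_succ']
      exact mul_apply_pos hM (pow_apply_nonneg hM _) hedge
        (transMatrix_pow_apply_left_pos hL hR x hx)
  · rintro ⟨⟨x, hx⟩, c⟩
    exact ⟨x + 1, by omega, transMatrix_pow_apply_zero_pos hL hR x hx c⟩

end Positivity

lemma crwRatio_succ {x : ℕ} (h : pR (x + 1) ≠ 0) :
    pR (x + 1) * crwRatio pL pR (x + 1) = (1 - pL x) * crwRatio pL pR x := by
  rw [crwRatio, crwRatio, Finset.prod_range_succ, Finset.prod_Icc_succ_top (by omega)]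
  field_simp

lemma crwRatio_nonneg {x : ℕ} (hL : ∀ y < x, pL y ≤ 1) (hR : ∀ y ≤ x, 0 ≤ pR y) :
    0 ≤ crwRatio pL pR x :=
  div_nonneg (Finset.prod_nonneg fun y hy => sub_nonneg.2 (hL y (Finset.mem_range.1 hy)))
    (Finset.prod_nonneg fun y hy => hR y (Finset.mem_Icc.1 hy).2)

lemma one_add_sum_crwRatio_pos (hL : ∀ y ≤ n, pL y ≤ 1) (hR : ∀ y ≤ n, 0 ≤ pR y) :
    0 < 1 + ∑ z ∈ Finset.Icc 1 n, crwRatio pL pR z := by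
  have := Finset.sum_nonneg fun z (hz : z ∈ Finset.Icc 1 n) =>
    crwRatio_nonneg pL pR (x := z) (fun y hy => hL y (by simp at hz; omega))
      (fun y hy => hR y (by simp at hz; omega))
  linarith

lemma sum_fin_crwRatio :
    ∑ x : Fin (n + 1), crwRatio pL pR x = 1 + ∑ z ∈ Finset.Icc 1 n, crwRatio pL pR z := by
  rw [Fin.sum_univ_eq_sum_range (crwRatio pL pR), Finset.range_eq_Ico,
    Finset.sum_eq_sum_Ico_succ_bot (by omega), Finset.Ico_add_one_right_eq_Icc]
  simp [crwRatio]

/-- An unnormalised stationary measure: at each site it is fixed by the coin, and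
`crwRatio_succ` makes it invariant under the shift. -/
noncomputable def statMeasure : Fin (n + 1) × Fin 2 → ℝ := fun p =>
  (if p.2 = 0 then pR p.1 else 1 - pL p.1) * crwRatio pL pR p.1

lemma crwC_statMeasure : crwC n pL pR (statMeasure n pL pR) = statMeasure n pL pR := by
  funext p
  simp only [crwC, statMeasure]
  split_ifs <;> simp_all <;> ring

lemma crwS_statMeasure (hR : ∀ y ≤ n, pR y ≠ 0) :
    crwS n (statMeasure n pL pR) = statMeasure n pL pR := by
  funext ⟨⟨x, hx⟩, c⟩
  rw [crwS_apply]
  obtain rfl | rfl : c = 0 ∨ c = 1 := by omega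
  · rcases x with _ | x
    · rfl
    · rw [shift_succ_left]
      simp [statMeasure]
      exact (crwRatio_succ pL pR (hR _ (by omega))).symm
  · obtain hlt | heq : x < n ∨ x = n := by omega
    · rw [shift_right_of_lt n x hlt]
      simp [statMeasure]
      exact crwRatio_succ pL pR (hR _ (by omega))
    · rw [show (⟨x, hx⟩ : Fin (n + 1)) = Fin.last n from Fin.ext heq, shift_last_right]

lemma crwU_statMeasure (hR : ∀ y ≤ n, pR y ≠ 0) :
    crwU n pL pR (statMeasure n pL pR) = statMeasure n pL pR := by
  rw [crwU, crwC_statMeasure, crwS_statMeasure n pL pR hR]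

lemma statMeasure_add {ν : ℝ} (hiso : ∀ x ≤ n, pL x - pR x = ν) (x : Fin (n + 1)) :
    statMeasure n pL pR (x, 0) + statMeasure n pL pR (x, 1) = (1 - ν) * crwRatio pL pR x := by
  simp [statMeasure]
  linear_combination (-crwRatio pL pR x) * hiso x (by omega)

lemma sum_statMeasure {ν : ℝ} (hiso : ∀ x ≤ n, pL x - pR x = ν) :
    ∑ p, statMeasure n pL pR p = (1 - ν) * (1 + ∑ z ∈ Finset.Icc 1 n, crwRatio pL pR z) := by
  simp only [Fintype.sum_prod_type, Fin.sum_univ_two, statMeasure_add n pL pR hiso,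
    ← Finset.mul_sum, sum_fin_crwRatio]

end CRW

theorem stmt19_general (n : ℕ) (pL pR : ℕ → ℝ) (ν : ℝ)
    (hL : ∀ y ≤ n, 0 < pL y ∧ pL y < 1) (hR : ∀ y ≤ n, 0 < pR y ∧ pR y < 1)
    (hiso : ∀ x ≤ n, pL x - pR x = ν) :
    ∀ φ : Fin (n + 1) × Fin 2 → ℝ, (∀ p, 0 ≤ φ p) → ∑ p, φ p = 1 →
      ∀ x : Fin (n + 1),
        Tendsto
          (fun t : ℕ =>
            (crwU n pL pR)^[t] φ (x, 0) + (crwU n pL pR)^[t] φ (x, 1))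
          atTop (𝓝 (crwLimit n pL pR (x : ℕ))) := by
  open CRW Matrix in
  intro φ _ hφ x
  have hν : 1 - ν ≠ 0 := by
    have := hiso 0 n.zero_le
    linarith [(hL 0 n.zero_le).2, (hR 0 n.zero_le).1]
  have hZ := one_add_sum_crwRatio_pos n pL pR (fun y hy => (hL y hy).2.le)
    (fun y hy => (hR y hy).1.le)
  have hμ : ∑ p, statMeasure n pL pR p ≠ 0 := by
    rw [sum_statMeasure n pL pR hiso]
    exact mul_ne_zero hν hZ.ne'
  set π := (∑ p, statMeasure n pL pR p)⁻¹ • statMeasure n pL pR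
  have hπ : transMatrix n pL pR *ᵥ π = π := by
    rw [mulVec_smul, transMatrix_mulVec, crwU_statMeasure n pL pR fun y hy => (hR y hy).1.ne']
  have hsum : ∑ p, φ p = ∑ p, π p := by
    simp only [π, Pi.smul_apply, smul_eq_mul, ← Finset.mul_sum, inv_mul_cancel₀ hμ, hφ]
  have hlim := tendsto_pow_mulVec_of_isPrimitive (transMatrix_mem_colStochastic hL hR)
    (transMatrix_isPrimitive hL hR) hπ hsum
  simp only [transMatrix_pow_mulVec] at hlim
  have hx : π (x, 0) + π (x, 1) = crwLimit n pL pR x := by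
    simp [π, ← mul_add, statMeasure_add n pL pR hiso, sum_statMeasure n pL pR hiso, crwLimit]
    field_simp
  rw [← hx]
  exact (((continuous_apply (x, 0)).tendsto π).comp hlim).add
    (((continuous_apply (x, 1)).tendsto π).comp hlim)

theorem stmt19 (n : ℕ) (hn : 1 ≤ n) (pL pR : ℕ → ℝ) (ν : ℝ)
    (hL : ∀ y ≤ n, 0 < pL y ∧ pL y < 1) (hR : ∀ y ≤ n, 0 < pR y ∧ pR y < 1)
    (hν0 : 0 < |ν|) (hν1 : |ν| < 1) (hiso : ∀ x ≤ n, pL x - pR x = ν)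
    (hB : ν < 0 →
      ∀ (lam : ℝ) (v : Fin (n + 1) → ℝ), v ≠ 0 →
        (jacB n (fun x => Real.sqrt 2 * (1 - pL x) / (1 - ν))
            (fun x => -(Real.sqrt 2 * pR x) / (1 - ν))).mulVec v = lam • v →
        Real.sqrt (-4 * ν) / (1 - ν) < |lam| ∧ |lam| ≤ 1) :
    ∀ φ : Fin (n + 1) × Fin 2 → ℝ, (∀ p, 0 ≤ φ p) → ∑ p, φ p = 1 →
      ∀ x : Fin (n + 1),
        Tendsto
          (fun t : ℕ =>
            (crwU n pL pR)^[t] φ (x, 0) + (crwU n pL pR)^[t] φ (x, 1))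
          atTop (𝓝 (crwLimit n pL pR (x : ℕ))) :=
  stmt19_general n pL pR ν hL hR hiso
end
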